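/- Suppose a distribution X over {0,1}^n is ε-far, in Hamming earth mover's distance, from every distribution with support size at most m. Then for every finite set W of strings with |W| ≤ m, the probability that a sample x ~ X is at relative Hamming distance at least ε/2 from every element of W is at least ε/2. -/

import Mathlib

/-!
Round every sample of `X` to a nearest point of `W`. The rounded distribution has support inside
`W`, so it is `ε`-far from `X`; on the other hand the rounding coupling moves the mass of the points
that are `ε/2`-close to `W` by less than `ε/2`, and every other point by at most `1`. Hence
`ε < (mass far from W) + ε/2`.
-/

open Finset
open scoped Classical

noncomputable section

/-- A probability distribution on a finite type, given as a mass function. -/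
def IsDist {α : Type*} [Fintype α] (P : α → ℝ) : Prop :=
  (∀ x, 0 ≤ P x) ∧ ∑ x, P x = 1

/-- A coupling of two mass functions. -/
def IsCoupling {α : Type*} [Fintype α] (P Q : α → ℝ) (W : α → α → ℝ) : Prop :=
  (∀ x y, 0 ≤ W x y) ∧ (∀ x, ∑ y, W x y = P x) ∧ (∀ y, ∑ x, W x y = Q y)

/-- Earth mover's distance with respect to a cost function `d`. -/
def emd {α : Type*} [Fintype α] (d : α → α → ℝ) (P Q : α → ℝ) : ℝ :=
  sInf {c : ℝ | ∃ W, IsCoupling P Q W ∧ c = ∑ x, ∑ y, W x y * d x y}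

/-- Total variation distance. -/
def tv {α : Type*} [Fintype α] (P Q : α → ℝ) : ℝ :=
  (∑ x, |P x - Q x|) / 2

/-- Relative Hamming distance on `n`-bit strings. -/
def relHamming {n : ℕ} (x y : Fin n → Bool) : ℝ :=
  (hammingDist x y : ℝ) / n

/-- Support size of a mass function. -/
def suppCard {α : Type*} [Fintype α] (P : α → ℝ) : ℕ :=
  (univ.filter fun x => P x ≠ 0).card

/-- Pushforward of a mass function along a map. -/
def push {α β : Type*} [Fintype α] (f : α → β) (P : α → ℝ) : β → ℝ :=
  fun y => ∑ x ∈ univ.filter (fun x => f x = y), P x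

section Rounding

variable {α β : Type*}

lemma exists_nearest (d : α → α → ℝ) {V : Finset α} (hV : V.Nonempty) :
    ∃ f : α → α, ∀ x, f x ∈ V ∧ ∀ w ∈ V, d x (f x) ≤ d x w := by
  choose f hf using fun x => V.exists_min_image (d x) hV
  exact ⟨f, hf⟩

variable [Fintype α]

lemma IsDist.push [Fintype β] {X : α → ℝ} (hX : IsDist X) (f : α → β) : IsDist (push f X) :=
  ⟨fun _ => sum_nonneg fun x _ => hX.1 x, (sum_fiberwise _ _ _).trans hX.2⟩

lemma suppCard_push_le [Fintype β] (f : α → β) (X : α → ℝ) {V : Finset β}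
    (hf : ∀ x, f x ∈ V) : suppCard (push f X) ≤ V.card := by
  refine card_le_card fun y hy => ?_
  obtain ⟨x, hx, -⟩ := exists_ne_zero_of_sum_ne_zero (mem_filter.mp hy).2
  exact (mem_filter.mp hx).2 ▸ hf x

lemma isCoupling_push (f : α → α) {X : α → ℝ} (hX : ∀ x, 0 ≤ X x) :
    IsCoupling X (push f X) fun x y => if y = f x then X x else 0 := by
  refine ⟨fun x y => ite_nonneg (hX x) le_rfl, fun x => by simp, fun y => ?_⟩
  simp only [push, sum_filter, eq_comm]

lemma emd_push_le (d : α → α → ℝ) (hd : ∀ x y, 0 ≤ d x y) {X : α → ℝ} (hX : ∀ x, 0 ≤ X x)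
    (f : α → α) : emd d X (push f X) ≤ ∑ x, X x * d x (f x) := by
  refine csInf_le ⟨0, ?_⟩ ⟨_, isCoupling_push f hX, ?_⟩
  · rintro c ⟨C, hC, rfl⟩
    exact sum_nonneg fun x _ => sum_nonneg fun y _ => mul_nonneg (hC.1 x y) (hd x y)
  · simp [ite_mul]

def farMass [DecidableEq α] (d : α → α → ℝ) (X : α → ℝ) (V : Finset α) (r : ℝ) : ℝ :=
  ∑ x ∈ univ.filter (fun x => ∀ w ∈ V, r ≤ d x w), X x

lemma farMass_anti [DecidableEq α] (d : α → α → ℝ) {X : α → ℝ} (hX : ∀ x, 0 ≤ X x)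
    {V V' : Finset α} (hVV' : V ⊆ V') (r : ℝ) : farMass d X V' r ≤ farMass d X V r :=
  sum_le_sum_of_subset_of_nonneg (monotone_filter_right _ fun _ _ h w hw => h w (hVV' hw))
    fun x _ _ => hX x

lemma sum_mul_nearest_le [DecidableEq α] (d : α → α → ℝ) (hd : ∀ x y, d x y ≤ 1) {X : α → ℝ}
    (hX : IsDist X) {V : Finset α} {f : α → α} (hf : ∀ x, ∀ w ∈ V, d x (f x) ≤ d x w) {r : ℝ}
    (hr : 0 ≤ r) :
    ∑ x, X x * d x (f x) ≤ farMass d X V r + r := by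
  have hpoint : ∀ x, X x * d x (f x) ≤
      (if ∀ w ∈ V, r ≤ d x w then X x else 0) + X x * r := by
    intro x
    split_ifs with hfar
    · nlinarith [hX.1 x, hd x (f x)]
    · push Not at hfar
      obtain ⟨w, hw, hlt⟩ := hfar
      nlinarith [hX.1 x, hf x w hw]
  calc ∑ x, X x * d x (f x)
      ≤ ∑ x, ((if ∀ w ∈ V, r ≤ d x w then X x else 0) + X x * r) :=
        sum_le_sum fun x _ => hpoint x
    _ = farMass d X V r + r := by
        rw [sum_add_distrib, ← sum_mul, hX.2, one_mul, ← sum_filter, farMass]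

theorem lt_farMass_add_of_far [DecidableEq α] (d : α → α → ℝ) (hd0 : ∀ x y, 0 ≤ d x y)
    (hd1 : ∀ x y, d x y ≤ 1) {m : ℕ} {ε : ℝ} {X : α → ℝ} (hX : IsDist X)
    (hfar : ∀ Q : α → ℝ, IsDist Q → suppCard Q ≤ m → ε < emd d X Q)
    {V : Finset α} (hV : V.Nonempty) (hVm : V.card ≤ m) {r : ℝ} (hr : 0 ≤ r) :
    ε < farMass d X V r + r := by
  obtain ⟨f, hf⟩ := exists_nearest d hV
  calc ε < emd d X (push f X) :=
        hfar _ (hX.push f) ((suppCard_push_le f X fun x => (hf x).1).trans hVm)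
    _ ≤ ∑ x, X x * d x (f x) := emd_push_le d hd0 hX.1 f
    _ ≤ farMass d X V r + r := sum_mul_nearest_le d hd1 hX (fun x => (hf x).2) hr

end Rounding

lemma relHamming_nonneg {n : ℕ} (x y : Fin n → Bool) : 0 ≤ relHamming x y := by
  unfold relHamming
  positivity

lemma relHamming_le_one {n : ℕ} (x y : Fin n → Bool) : relHamming x y ≤ 1 :=
  div_le_one_of_le₀ (by exact_mod_cast hammingDist_le_card_fintype.trans_eq (Fintype.card_fin n))
    n.cast_nonneg

theorem far_from_small_support_general {n m : ℕ} (hm : 0 < m) (ε : ℝ)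
    (X : (Fin n → Bool) → ℝ) (hX : IsDist X)
    (hfar : ∀ Q : (Fin n → Bool) → ℝ, IsDist Q → suppCard Q ≤ m →
      ε < emd relHamming X Q)
    (W : Finset (Fin n → Bool)) (hW : W.card ≤ m) :
    ε / 2 ≤ ∑ x ∈ univ.filter (fun x => ∀ w ∈ W, ε / 2 ≤ relHamming x w), X x := by
  change ε / 2 ≤ farMass relHamming X W (ε / 2)
  rcases le_or_gt ε 0 with hε | hε
  · exact (div_nonpos_of_nonpos_of_nonneg hε zero_le_two).trans
      (sum_nonneg fun x _ => hX.1 x)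
  obtain ⟨V, hWV, hV, hVm⟩ : ∃ V, W ⊆ V ∧ V.Nonempty ∧ V.card ≤ m := by
    rcases W.eq_empty_or_nonempty with rfl | hW'
    · exact ⟨{default}, empty_subset _, singleton_nonempty _, hm⟩
    · exact ⟨W, subset_rfl, hW', hW⟩
  have := lt_farMass_add_of_far relHamming relHamming_nonneg relHamming_le_one hX hfar hV hVm
    (half_pos hε).le
  linarith [farMass_anti relHamming hX.1 hWV (ε / 2)]

/-- if `X` is ε-far in Hamming EMD from every distribution of support size at most
`m`, then for every set `W` of at most `m` strings, the `X`-probability of being (ε/2)-H-far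
from all of `W` is at least ε/2. -/
theorem far_from_small_support {n m : ℕ} (hn : 0 < n) (hm : 0 < m) (ε : ℝ)
    (X : (Fin n → Bool) → ℝ) (hX : IsDist X)
    (hfar : ∀ Q : (Fin n → Bool) → ℝ, IsDist Q → suppCard Q ≤ m →
      ε < emd relHamming X Q)
    (W : Finset (Fin n → Bool)) (hW : W.card ≤ m) :
    ε / 2 ≤ ∑ x ∈ univ.filter (fun x => ∀ w ∈ W, ε / 2 ≤ relHamming x w), X x :=
  far_from_small_support_general hm ε X hX hfar W hW
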